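/- Let (X,ω) be a symplectic manifold with two almost complex structures J_0, J_t both compatible with ω. Then the complexified tangent space at every point splits as a direct sum TX_ℂ = T^{(1,0)}X_0 ⊕ T^{(0,1)}X_t, where T^{(1,0)}X_0 is the +i eigenspace of J_0 and T^{(0,1)}X_t is the −i eigenspace of J_t. -/

import Mathlib

/-!
Positivity of `ω(v, J₀ v)` and `ω(v, J₁ v)` makes `J₀ + J₁` injective, hence invertible, and so is
its complexification. An element of both eigenspaces is killed by `J₀ + J₁`, so it vanishes.
Conversely, given `w`, solve `(J₀ + J₁) x = J₁ w` and put `y = w - x`, so that `J₀ x = J₁ y`;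
then `w = (x - i J₀ x) + (y + i J₁ y)`, and the two summands lie in the `+i` eigenspace of `J₀`
and the `-i` eigenspace of `J₁`.
-/

namespace Module.End

variable {R M : Type*} [CommRing R] [AddCommGroup M] [Module R M]

theorem sub_smul_mem_eigenspace_of_comp_self_eq_neg_id {A : End R M}
    (hA : A ∘ₗ A = -LinearMap.id) {i : R} (hi : i * i = -1) (x : M) :
    x - i • A x ∈ eigenspace A i := by
  have hAA : A (A x) = -x := LinearMap.congr_fun hA x
  rw [mem_eigenspace_iff, map_sub, map_smul, hAA, smul_sub, smul_neg, smul_smul, hi, neg_one_smul]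
  abel

theorem isCompl_eigenspace_neg_of_bijective_add {A B : End R M}
    (hA : A ∘ₗ A = -LinearMap.id) (hB : B ∘ₗ B = -LinearMap.id)
    (hAB : Function.Bijective (A + B)) {i : R} (hi : i * i = -1) :
    IsCompl (eigenspace A i) (eigenspace B (-i)) := by
  constructor
  · rw [Submodule.disjoint_def]
    intro w hwA hwB
    rw [mem_eigenspace_iff] at hwA hwB
    apply hAB.injective
    rw [LinearMap.add_apply, hwA, hwB, neg_smul, add_neg_cancel, map_zero]
  · rw [codisjoint_iff_le_sup]
    intro w _
    obtain ⟨x, hx⟩ := hAB.surjective (B w)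
    have hxy : A x = B (w - x) := by
      rw [map_sub, ← hx, LinearMap.add_apply]
      abel
    have hnegi : -i * -i = -1 := by rw [neg_mul_neg, hi]
    refine Submodule.mem_sup.mpr ⟨_, sub_smul_mem_eigenspace_of_comp_self_eq_neg_id hA hi x,
      _, sub_smul_mem_eigenspace_of_comp_self_eq_neg_id hB hnegi (w - x), ?_⟩
    rw [hxy, neg_smul]
    abel

end Module.End

theorem LinearMap.baseChange_bijective {R A M N : Type*} [CommSemiring R] [Semiring A]
    [Algebra R A] [AddCommMonoid M] [AddCommMonoid N] [Module R M] [Module R N]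
    {f : M →ₗ[R] N} (hf : Function.Bijective f) : Function.Bijective (f.baseChange A) :=
  ((LinearEquiv.ofBijective f hf).baseChange R A M N).bijective

theorem LinearMap.baseChange_comp_self_of_eq_neg_id {R A M : Type*} [CommRing R] [Ring A]
    [Algebra R A] [AddCommGroup M] [Module R M] {J : M →ₗ[R] M}
    (hJ : J ∘ₗ J = -LinearMap.id) : J.baseChange A ∘ₗ J.baseChange A = -LinearMap.id := by
  rw [← LinearMap.baseChange_comp, hJ, LinearMap.baseChange_neg, LinearMap.baseChange_id]

theorem LinearMap.injective_add_of_pos {V : Type*} [AddCommGroup V] [Module ℝ V]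
    (ω : V →ₗ[ℝ] V →ₗ[ℝ] ℝ) {J₀ J₁ : V →ₗ[ℝ] V}
    (hpos₀ : ∀ v : V, v ≠ 0 → 0 < ω v (J₀ v)) (hpos₁ : ∀ v : V, v ≠ 0 → 0 < ω v (J₁ v)) :
    Function.Injective (J₀ + J₁) := by
  rw [← LinearMap.ker_eq_bot, LinearMap.ker_eq_bot']
  intro v hv
  by_contra hne
  have hJ₁ : J₁ v = -J₀ v := eq_neg_of_add_eq_zero_right hv
  have h₁ := hpos₁ v hne
  rw [hJ₁, map_neg] at h₁
  linarith [hpos₀ v hne]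

theorem complexified_splitting_two_compatible_structures_general
    {V : Type*} [AddCommGroup V] [Module ℝ V] [FiniteDimensional ℝ V]
    (ω : V →ₗ[ℝ] V →ₗ[ℝ] ℝ)
    (J0 J1 : V →ₗ[ℝ] V)
    (hJ0 : J0 ∘ₗ J0 = -LinearMap.id) (hJ1 : J1 ∘ₗ J1 = -LinearMap.id)
    (hpos0 : ∀ v : V, v ≠ 0 → 0 < ω v (J0 v))
    (hpos1 : ∀ v : V, v ≠ 0 → 0 < ω v (J1 v)) :
    IsCompl (Module.End.eigenspace (J0.baseChange ℂ) Complex.I)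
      (Module.End.eigenspace (J1.baseChange ℂ) (-Complex.I)) := by
  have hinj := LinearMap.injective_add_of_pos ω hpos0 hpos1
  have hbij : Function.Bijective ((J0 + J1).baseChange ℂ) :=
    LinearMap.baseChange_bijective ⟨hinj, LinearMap.injective_iff_surjective.mp hinj⟩
  rw [LinearMap.baseChange_add] at hbij
  exact Module.End.isCompl_eigenspace_neg_of_bijective_add
    (LinearMap.baseChange_comp_self_of_eq_neg_id hJ0)
    (LinearMap.baseChange_comp_self_of_eq_neg_id hJ1) hbij Complex.I_mul_I

/-- If `J₀` and `J₁` are two complex structures on a symplectic vector space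
`(V, ω)`, both compatible with `ω`, then the complexification `ℂ ⊗[ℝ] V`
splits as the direct sum of the `+i` eigenspace of `J₀` and the `-i`
eigenspace of `J₁` (this is the splitting
`TX_ℂ = T^{(1,0)}X_0 ⊕ T^{(0,1)}X_t` at each point). -/
theorem complexified_splitting_two_compatible_structures
    {V : Type*} [AddCommGroup V] [Module ℝ V] [FiniteDimensional ℝ V]
    (ω : V →ₗ[ℝ] V →ₗ[ℝ] ℝ) (hskew : ∀ v : V, ω v v = 0)
    (hnondeg : ∀ v : V, v ≠ 0 → ∃ w : V, ω v w ≠ 0)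
    (J0 J1 : V →ₗ[ℝ] V)
    (hJ0 : J0 ∘ₗ J0 = -LinearMap.id) (hJ1 : J1 ∘ₗ J1 = -LinearMap.id)
    (hcompat0 : ∀ u v : V, ω (J0 u) (J0 v) = ω u v)
    (hcompat1 : ∀ u v : V, ω (J1 u) (J1 v) = ω u v)
    (hpos0 : ∀ v : V, v ≠ 0 → 0 < ω v (J0 v))
    (hpos1 : ∀ v : V, v ≠ 0 → 0 < ω v (J1 v)) :
    IsCompl (Module.End.eigenspace (J0.baseChange ℂ) Complex.I)
      (Module.End.eigenspace (J1.baseChange ℂ) (-Complex.I)) :=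
  complexified_splitting_two_compatible_structures_general ω J0 J1 hJ0 hJ1 hpos0 hpos1
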